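/- arXiv:1306.6220 — 2 statements merged into one kernel-verified Lean document; each statement's English description precedes it below -/
import Mathlib

section
/- Let λ, μ ∈ ℝ satisfy cos(λπ) > cos(μπ). Then the function k ↦ Θ(λK(k), k)/Θ(μK(k), k) is positive and strictly monotone decreasing on the interval k ∈ (0,1). -/
open Real

/-- Complete elliptic integral of the first kind. -/
noncomputable def EllK (k : ℝ) : ℝ :=
  ∫ θ in (0:ℝ)..(π/2), 1 / Real.sqrt (1 - k^2 * Real.sin θ ^ 2)

/-- Complete elliptic integral of the second kind. -/
noncomputable def EllE (k : ℝ) : ℝ :=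
  ∫ θ in (0:ℝ)..(π/2), Real.sqrt (1 - k^2 * Real.sin θ ^ 2)

/-- Complementary complete elliptic integral `K'(k) = K(√(1-k²))`. -/
noncomputable def EllK' (k : ℝ) : ℝ := EllK (Real.sqrt (1 - k^2))

/-- Complementary elliptic integral of the second kind `E'(k) = E(√(1-k²))`. -/
noncomputable def EllE' (k : ℝ) : ℝ := EllE (Real.sqrt (1 - k^2))

/-- The nome `q = exp(-π K'(k)/K(k))`. -/
noncomputable def nome (k : ℝ) : ℝ := Real.exp (-π * EllK' k / EllK k)

/-- Jacobi's theta function `Θ(u,k) = 1 + 2 ∑_{n≥1} (-1)^n q^{n²} cos(nπu/K)`. -/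
noncomputable def JTheta (u k : ℝ) : ℝ :=
  1 + 2 * ∑' n : ℕ, (-1 : ℝ)^(n+1) * nome k ^ ((n+1)^2) *
    Real.cos (((n:ℝ)+1) * π * u / EllK k)

/-- Jacobi's theta function `H(u,k) = 2 ∑_{n≥0} (-1)^n q^{(n+1/2)²} sin((2n+1)πu/(2K))`. -/
noncomputable def JH (u k : ℝ) : ℝ :=
  2 * ∑' n : ℕ, (-1 : ℝ)^n * nome k ^ ((((n:ℝ) + 1/2)^2)) *
    Real.sin ((2*(n:ℝ)+1) * π * u / (2 * EllK k))

/-- Jacobi's theta function `H₁(u,k) = 2 ∑_{n≥0} q^{(n+1/2)²} cos((2n+1)πu/(2K))`. -/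
noncomputable def JH1 (u k : ℝ) : ℝ :=
  2 * ∑' n : ℕ, nome k ^ ((((n:ℝ) + 1/2)^2)) *
    Real.cos ((2*(n:ℝ)+1) * π * u / (2 * EllK k))

/-- Jacobi's theta function `Θ₁(u,k) = 1 + 2 ∑_{n≥1} q^{n²} cos(nπu/K)`. -/
noncomputable def JTheta1 (u k : ℝ) : ℝ :=
  1 + 2 * ∑' n : ℕ, nome k ^ ((n+1)^2) * Real.cos (((n:ℝ)+1) * π * u / EllK k)

/-- Jacobi's zeta function `zn(u,k) = Θ_u(u,k)/Θ(u,k)`. -/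
noncomputable def zn (u k : ℝ) : ℝ := deriv (fun v => JTheta v k) u / JTheta u k

/-- Jacobi's elliptic sine `sn(u,k) = H(u,k)/(√k Θ(u,k))`. -/
noncomputable def sn (u k : ℝ) : ℝ := JH u k / (Real.sqrt k * JTheta u k)

/-- Jacobi's elliptic cosine `cn(u,k) = √(k'/k) H₁(u,k)/Θ(u,k)`. -/
noncomputable def cn (u k : ℝ) : ℝ :=
  Real.sqrt (Real.sqrt (1 - k^2) / k) * JH1 u k / JTheta u k

/-- Jacobi's delta amplitude `dn(u,k) = √(k') Θ₁(u,k)/Θ(u,k)`. -/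
noncomputable def dn (u k : ℝ) : ℝ :=
  Real.sqrt (Real.sqrt (1 - k^2)) * JTheta1 u k / JTheta u k

/-!
Write `q` for the nome and `ϑ(q, θ) = 1 + 2 ∑ (-1)ⁿ q^(n²) cos nθ`, so that `Θ(λK, k) = ϑ(q, λπ)`.
The Jacobi triple product `ϑ(q, θ) = (q²; q²)_∞ ∏ₙ (1 - 2 q^(2n+1) cos θ + q^(4n+2))`, obtained as
the limit of its finite Gaussian-binomial form, shows that `ϑ > 0` and that
`ϑ(q, λπ) / ϑ(q, μπ) = ∏ₙ f(q^(2n+1))` with `f(r) = (1 - 2r cos λπ + r²) / (1 - 2r cos μπ + r²)`.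
When `cos λπ > cos μπ`, `f` is strictly decreasing on `[0, 1)`, so the ratio strictly decreases
in `q`; and `q` strictly increases with `k`, because `K` increases and `K'` decreases.
-/

open Finset Filter Topology

section GaussianBinomial

variable {R : Type*} [CommSemiring R] (Q : R)

def gaussBinom : ℕ → ℕ → R
  | _, 0 => 1
  | 0, _ + 1 => 0
  | m + 1, j + 1 => gaussBinom m j + Q ^ (j + 1) * gaussBinom m (j + 1)

@[simp] lemma gaussBinom_zero_right (m : ℕ) : gaussBinom Q m 0 = 1 := by
  cases m <;> rfl

lemma gaussBinom_succ_succ (m j : ℕ) :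
    gaussBinom Q (m + 1) (j + 1) = gaussBinom Q m j + Q ^ (j + 1) * gaussBinom Q m (j + 1) :=
  rfl

lemma gaussBinom_eq_zero_of_lt {m j : ℕ} (h : m < j) : gaussBinom Q m j = 0 := by
  induction m generalizing j with
  | zero => obtain ⟨j, rfl⟩ := Nat.exists_eq_add_of_lt h; rfl
  | succ m ih =>
    obtain ⟨j, rfl⟩ := Nat.exists_eq_add_of_lt (Nat.zero_lt_of_lt h)
    rw [zero_add, gaussBinom_succ_succ, ih (by omega), ih (by omega), mul_zero, add_zero]

@[simp] lemma gaussBinom_self (m : ℕ) : gaussBinom Q m m = 1 := by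
  induction m with
  | zero => rfl
  | succ m ih =>
    rw [gaussBinom_succ_succ, ih, gaussBinom_eq_zero_of_lt Q m.lt_succ_self, mul_zero, add_zero]

lemma map_gaussBinom {S : Type*} [CommSemiring S] (f : R →+* S) (m j : ℕ) :
    f (gaussBinom Q m j) = gaussBinom (f Q) m j := by
  induction m generalizing j with
  | zero => cases j <;> simp [gaussBinom]
  | succ m ih => cases j <;> simp [gaussBinom_succ_succ, ih]

theorem prod_one_add_mul_pow_eq_sum (x : R) (m : ℕ) :
    ∏ k ∈ range m, (1 + x * Q ^ k) =
      ∑ j ∈ range (m + 1), gaussBinom Q m j * Q ^ j.choose 2 * x ^ j := by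
  induction m generalizing x with
  | zero => simp
  | succ m ih =>
    have hprod : ∏ k ∈ range m, (1 + x * Q ^ (k + 1)) = ∏ k ∈ range m, (1 + x * Q * Q ^ k) :=
      prod_congr rfl fun k _ => by ring
    have hterm : ∀ j, gaussBinom Q (m + 1) (j + 1) * Q ^ (j + 1).choose 2 * x ^ (j + 1) =
        x * (gaussBinom Q m j * Q ^ j.choose 2 * (x * Q) ^ j) +
          gaussBinom Q m (j + 1) * Q ^ (j + 1).choose 2 * (x * Q) ^ (j + 1) := by
      intro j
      rw [gaussBinom_succ_succ, Nat.choose_succ_succ', Nat.choose_one_right]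
      ring
    have htail : ∑ j ∈ range (m + 1),
        gaussBinom Q m (j + 1) * Q ^ (j + 1).choose 2 * (x * Q) ^ (j + 1) + 1 =
          ∑ j ∈ range (m + 1), gaussBinom Q m j * Q ^ j.choose 2 * (x * Q) ^ j := by
      rw [sum_range_succ, gaussBinom_eq_zero_of_lt Q (Nat.lt_succ_self m), zero_mul, zero_mul,
        add_zero, sum_range_succ' _ m]
      simp
    rw [prod_range_succ', sum_range_succ', hprod, ih]
    simp_rw [hterm]
    rw [sum_add_distrib, ← mul_sum, gaussBinom_zero_right, add_assoc]
    simp only [Nat.choose_zero_succ, pow_zero, mul_one, htail]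
    ring

end GaussianBinomial

section QPochhammer

variable {R : Type*} [CommRing R] (Q : R)

def qPochhammer (n : ℕ) : R := ∏ r ∈ range n, (1 - Q ^ (r + 1))

lemma qPochhammer_succ (n : ℕ) :
    qPochhammer Q (n + 1) = qPochhammer Q n * (1 - Q ^ (n + 1)) :=
  prod_range_succ _ n

lemma gaussBinom_add_mul_qPochhammer (a b : ℕ) :
    gaussBinom Q (a + b) a * qPochhammer Q a * qPochhammer Q b = qPochhammer Q (a + b) := by
  induction a generalizing b with
  | zero => simp [qPochhammer]
  | succ a iha =>
    induction b with
    | zero => simp [qPochhammer]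
    | succ b ihb =>
      have hpascal : gaussBinom Q (a + 1 + (b + 1)) (a + 1) =
          gaussBinom Q (a + (b + 1)) a + Q ^ (a + 1) * gaussBinom Q (a + 1 + b) (a + 1) := by
        rw [show a + 1 + (b + 1) = a + (b + 1) + 1 by omega, gaussBinom_succ_succ,
          show a + (b + 1) = a + 1 + b by omega]
      have hprev := iha (b + 1)
      rw [qPochhammer_succ Q b] at hprev
      rw [show a + 1 + b = a + (b + 1) by omega, qPochhammer_succ Q a] at ihb
      rw [hpascal, show a + 1 + b = a + (b + 1) by omega,
        show a + 1 + (b + 1) = a + (b + 1) + 1 by omega, qPochhammer_succ Q (a + (b + 1)),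
        qPochhammer_succ Q a, qPochhammer_succ Q b]
      linear_combination (1 - Q ^ (a + 1)) * hprev + Q ^ (a + 1) * (1 - Q ^ (b + 1)) * ihb

end QPochhammer

section RealQPochhammer

variable {Q : ℝ}

noncomputable def qPochhammerInf (Q : ℝ) : ℝ := ∏' r : ℕ, (1 - Q ^ (r + 1))

lemma one_sub_pow_succ_pos (hQ0 : 0 ≤ Q) (hQ1 : Q < 1) (r : ℕ) : 0 < 1 - Q ^ (r + 1) :=
  sub_pos.2 (pow_lt_one₀ hQ0 hQ1 r.succ_ne_zero)

lemma qPochhammer_pos (hQ0 : 0 ≤ Q) (hQ1 : Q < 1) (n : ℕ) : 0 < qPochhammer Q n :=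
  prod_pos fun r _ => one_sub_pow_succ_pos hQ0 hQ1 r

lemma qPochhammer_antitone (hQ0 : 0 ≤ Q) (hQ1 : Q < 1) : Antitone (qPochhammer Q) :=
  antitone_nat_of_succ_le fun n => by
    rw [qPochhammer_succ]
    exact mul_le_of_le_one_right (qPochhammer_pos hQ0 hQ1 n).le
      (sub_le_self _ (pow_nonneg hQ0 _))

lemma tendsto_qPochhammer (hQ0 : 0 ≤ Q) (hQ1 : Q < 1) :
    Tendsto (qPochhammer Q) atTop (𝓝 (qPochhammerInf Q)) := by
  refine HasProd.tendsto_prod_nat (Multipliable.hasProd ?_)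
  simp_rw [sub_eq_add_neg]
  refine Real.multipliable_one_add_of_summable ?_
  simpa using ((summable_nat_add_iff 1).mpr (summable_geometric_of_lt_one hQ0 hQ1)).neg

lemma qPochhammerInf_pos (hQ0 : 0 ≤ Q) (hQ1 : Q < 1) : 0 < qPochhammerInf Q := by
  have hlog : Summable fun r : ℕ => Real.log (1 + -Q ^ (r + 1)) :=
    Real.summable_log_one_add_of_summable
      ((summable_nat_add_iff 1).mpr (summable_geometric_of_lt_one hQ0 hQ1)).neg
  simp_rw [← sub_eq_add_neg] at hlog
  rw [qPochhammerInf, ← Real.rexp_tsum_eq_tprod (one_sub_pow_succ_pos hQ0 hQ1) hlog]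
  exact exp_pos _

lemma qPochhammerInf_le (hQ0 : 0 ≤ Q) (hQ1 : Q < 1) (n : ℕ) :
    qPochhammerInf Q ≤ qPochhammer Q n :=
  (qPochhammer_antitone hQ0 hQ1).le_of_tendsto (tendsto_qPochhammer hQ0 hQ1) n

lemma gaussBinom_nonneg (hQ : 0 ≤ Q) (m j : ℕ) : 0 ≤ gaussBinom Q m j := by
  induction m generalizing j with
  | zero => cases j <;> simp [gaussBinom]
  | succ m ih =>
    cases j with
    | zero => simp
    | succ j => exact add_nonneg (ih j) (mul_nonneg (pow_nonneg hQ _) (ih _))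

lemma gaussBinom_add_eq_div (hQ0 : 0 ≤ Q) (hQ1 : Q < 1) (a b : ℕ) :
    gaussBinom Q (a + b) a = qPochhammer Q (a + b) / (qPochhammer Q a * qPochhammer Q b) := by
  rw [eq_div_iff (mul_pos (qPochhammer_pos hQ0 hQ1 a) (qPochhammer_pos hQ0 hQ1 b)).ne',
    ← mul_assoc, gaussBinom_add_mul_qPochhammer]

lemma gaussBinom_le_inv_qPochhammerInf (hQ0 : 0 ≤ Q) (hQ1 : Q < 1) (m j : ℕ) :
    gaussBinom Q m j ≤ (qPochhammerInf Q)⁻¹ := by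
  have hC := qPochhammerInf_pos hQ0 hQ1
  rcases lt_or_ge m j with hmj | hjm
  · rw [gaussBinom_eq_zero_of_lt Q hmj]; positivity
  obtain ⟨b, rfl⟩ := Nat.exists_eq_add_of_le hjm
  have hPj := qPochhammer_pos hQ0 hQ1 j
  have hPb := qPochhammer_pos hQ0 hQ1 b
  rw [gaussBinom_add_eq_div hQ0 hQ1, div_le_iff₀ (by positivity)]
  calc qPochhammer Q (j + b) ≤ qPochhammer Q b :=
        qPochhammer_antitone hQ0 hQ1 (Nat.le_add_left b j)
    _ ≤ (qPochhammerInf Q)⁻¹ * (qPochhammer Q j * qPochhammer Q b) := by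
        rw [← mul_assoc, le_mul_iff_one_le_left hPb, ← div_eq_inv_mul, one_le_div hC]
        exact qPochhammerInf_le hQ0 hQ1 j

lemma tendsto_gaussBinom_add {ι : Type*} {l : Filter ι} {a b : ι → ℕ} (hQ0 : 0 ≤ Q)
    (hQ1 : Q < 1) (ha : Tendsto a l atTop) (hb : Tendsto b l atTop) :
    Tendsto (fun n => gaussBinom Q (a n + b n) (a n)) l (𝓝 (qPochhammerInf Q)⁻¹) := by
  have hP := tendsto_qPochhammer hQ0 hQ1
  have hC := (qPochhammerInf_pos hQ0 hQ1).ne'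
  simp_rw [gaussBinom_add_eq_div hQ0 hQ1]
  have := (hP.comp (ha.atTop_add_atTop hb)).div ((hP.comp ha).mul (hP.comp hb)) (mul_ne_zero hC hC)
  rwa [div_mul_cancel_left₀ hC] at this

end RealQPochhammer

section FiniteTripleProduct

lemma prod_range_pow_two_mul_add_one {M : Type*} [CommMonoid M] (q : M) (m : ℕ) :
    ∏ n ∈ range m, q ^ (2 * n + 1) = q ^ (m ^ 2) := by
  induction m with
  | zero => simp
  | succ m ih => rw [prod_range_succ, ih, ← pow_add]; ring_nf

lemma two_mul_choose_two_eq (j : ℕ) : (2 * j.choose 2 : ℤ) = j * (j - 1) := by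
  have : (2 * j.choose 2 : ℚ) = j * (j - 1) := by rw [Nat.cast_choose_two]; ring
  exact_mod_cast this

variable {K : Type*} [Field K] {x q : K}

lemma prod_range_two_mul_one_add_mul_sq_pow (hq : q ≠ 0) (x : K) (m : ℕ) :
    ∏ k ∈ range (2 * m), (1 + x * q ^ (1 - 2 * (m : ℤ)) * (q ^ 2) ^ k) =
      ∏ n ∈ range m, (1 + x * (q ^ (2 * n + 1))⁻¹) * (1 + x * q ^ (2 * n + 1)) := by
  have hy : ∀ k : ℕ,
      x * q ^ (1 - 2 * (m : ℤ)) * (q ^ 2) ^ k = x * q ^ (2 * (k : ℤ) + 1 - 2 * m) := by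
    intro k
    rw [mul_assoc, ← zpow_natCast, ← zpow_natCast, ← zpow_mul, ← zpow_add₀ hq]
    congr 2; push_cast; ring
  rw [prod_mul_distrib, two_mul, prod_range_add, ← prod_range_reflect]
  congr 1 <;> refine prod_congr rfl fun n hn => ?_ <;> rw [hy, ← zpow_natCast]
  · have : n < m := mem_range.1 hn
    rw [← zpow_neg]
    congr 3
    push_cast [Nat.cast_sub (show n ≤ m - 1 by omega), Nat.cast_sub (show 1 ≤ m by omega)]
    ring
  · congr 3; push_cast; ring

theorem prod_jacobi_finite (hx : x ≠ 0) (hq : q ≠ 0) (m : ℕ) :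
    ∏ n ∈ range m, (1 + x * q ^ (2 * n + 1)) * (1 + x⁻¹ * q ^ (2 * n + 1)) =
      ∑ i ∈ Icc (-(m : ℤ)) m, gaussBinom (q ^ 2) (2 * m) (i + m).toNat * q ^ (i ^ 2) * x ^ i := by
  have hfactor : ∀ n : ℕ, (1 + x * q ^ (2 * n + 1)) * (1 + x⁻¹ * q ^ (2 * n + 1)) =
      x⁻¹ * q ^ (2 * n + 1) * ((1 + x * (q ^ (2 * n + 1))⁻¹) * (1 + x * q ^ (2 * n + 1))) := by
    intro n
    field_simp
    ring
  have hterm : ∀ j : ℕ, (x ^ m)⁻¹ * q ^ (m ^ 2) * (gaussBinom (q ^ 2) (2 * m) j *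
      (q ^ 2) ^ j.choose 2 * (x * q ^ (1 - 2 * (m : ℤ))) ^ j) =
        gaussBinom (q ^ 2) (2 * m) j * q ^ (((j : ℤ) - m) ^ 2) * x ^ ((j : ℤ) - m) := by
    intro j
    have hx_exp : (x ^ m)⁻¹ * x ^ j = x ^ ((j : ℤ) - m) := by
      rw [zpow_sub₀ hx, zpow_natCast, zpow_natCast, div_eq_inv_mul]
    have hq_exp : q ^ (m ^ 2) * (q ^ 2) ^ j.choose 2 * (q ^ (1 - 2 * (m : ℤ))) ^ j =
        q ^ (((j : ℤ) - m) ^ 2) := by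
      rw [← zpow_natCast, ← zpow_natCast (q ^ 2), ← zpow_natCast _ j, ← zpow_natCast q 2,
        ← zpow_mul, ← zpow_mul, ← zpow_add₀ hq, ← zpow_add₀ hq]
      congr 1
      push_cast
      linear_combination two_mul_choose_two_eq j
    rw [← hx_exp, ← hq_exp]
    ring
  rw [prod_congr rfl fun n _ => hfactor n, prod_mul_distrib, prod_mul_distrib, prod_const,
    card_range, inv_pow, prod_range_pow_two_mul_add_one,
    ← prod_range_two_mul_one_add_mul_sq_pow hq, prod_one_add_mul_pow_eq_sum, mul_sum]
  refine sum_nbij' (fun j => (j : ℤ) - m) (fun i => (i + m).toNat) ?_ ?_ ?_ ?_ fun j _ => ?_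
  · intro j hj; simp at hj ⊢; omega
  · intro i hi; simp at hi ⊢; omega
  · intro j _; simp
  · intro i hi; simp at hi ⊢; omega
  · rw [hterm]; simp

end FiniteTripleProduct

section TripleProduct

variable {q : ℝ}

def thetaFactor (c r : ℝ) : ℝ := 1 - 2 * c * r + r ^ 2

theorem prod_thetaFactor_eq_sum (hq : q ≠ 0) (θ : ℝ) (m : ℕ) :
    ∏ n ∈ range m, thetaFactor (cos θ) (q ^ (2 * n + 1)) =
      ∑ i ∈ Icc (-(m : ℤ)) m,
        gaussBinom (q ^ 2) (2 * m) (i + m).toNat * q ^ (i ^ 2) * cos (i * (θ + π)) := by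
  set x := Complex.exp (↑(θ + π) * Complex.I)
  have hx : x ≠ 0 := Complex.exp_ne_zero _
  have hsum : x + x⁻¹ = ((-2 * cos θ : ℝ) : ℂ) := by
    rw [← Complex.exp_neg, ← neg_mul, ← Complex.two_cos, ← Complex.ofReal_cos, cos_add_pi]
    push_cast; ring
  have hfactor : ∀ r : ℝ, (1 + x * r) * (1 + x⁻¹ * r) = (thetaFactor (cos θ) r : ℂ) := by
    intro r
    have : (1 + x * r) * (1 + x⁻¹ * r) = 1 + (x + x⁻¹) * r + x * x⁻¹ * r ^ 2 := by ring
    rw [this, hsum, mul_inv_cancel₀ hx, thetaFactor]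
    push_cast; ring
  have hre : ∀ i : ℤ, (x ^ i).re = cos (i * (θ + π)) := by
    intro i
    rw [← Complex.exp_int_mul, ← mul_assoc, ← Complex.ofReal_intCast, ← Complex.ofReal_mul,
      Complex.exp_ofReal_mul_I_re]
  have h := congrArg Complex.re (prod_jacobi_finite hx (Complex.ofReal_ne_zero.2 hq) m)
  simp only [← Complex.ofReal_pow, hfactor, ← Complex.ofReal_prod, Complex.ofReal_re,
    Complex.re_sum] at h
  refine h.trans (sum_congr rfl fun i _ => ?_)
  have hgb : ((gaussBinom (q ^ 2) (2 * m) (i + m).toNat : ℝ) : ℂ) =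
      gaussBinom ((q ^ 2 : ℝ) : ℂ) (2 * m) (i + m).toNat :=
    map_gaussBinom _ Complex.ofRealHom _ _
  rw [← hgb, ← Complex.ofReal_zpow, ← Complex.ofReal_mul, Complex.re_ofReal_mul, hre]

theorem tendsto_sum_Icc_mul {a : ℕ → ℤ → ℝ} {t : ℤ → ℝ} {α A : ℝ} (ht : Summable t)
    (ha : ∀ i, Tendsto (fun m => a m i) atTop (𝓝 α)) (hA : ∀ m i, |a m i| ≤ A) :
    Tendsto (fun m : ℕ => ∑ i ∈ Icc (-(m : ℤ)) m, a m i * t i) atTop (𝓝 (α * ∑' i, t i)) := by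
  have hfin : ∀ m : ℕ, ∑ i ∈ Icc (-(m : ℤ)) m, a m i * t i =
      ∑' i, (Icc (-(m : ℤ)) m : Set ℤ).indicator (fun i => a m i * t i) i := fun m =>
    sum_eq_tsum_indicator _ _
  simp_rw [hfin, ← tsum_mul_left]
  refine tendsto_tsum_of_dominated_convergence (bound := fun i => A * |t i|)
    ((summable_abs_iff.2 ht).mul_left A) (fun i => ?_) (Eventually.of_forall fun m i => ?_)
  · refine ((ha i).mul_const (t i)).congr' ?_
    filter_upwards [eventually_ge_atTop i.natAbs] with m hm
    rw [Set.indicator_of_mem (by simp; omega)]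
  · refine (norm_indicator_le_norm_self _ _).trans ?_
    rw [Real.norm_eq_abs, abs_mul]
    exact mul_le_mul_of_nonneg_right (hA m i) (abs_nonneg _)

lemma summable_zpow_sq (hq0 : 0 < q) (hq1 : q < 1) : Summable fun i : ℤ => q ^ (i ^ 2) := by
  have h : Summable fun n : ℕ => q ^ ((n : ℤ) ^ 2) := by
    refine Summable.of_nonneg_of_le (fun n => by positivity) (fun n => ?_)
      (summable_geometric_of_lt_one hq0.le hq1)
    rw [← Nat.cast_pow, zpow_natCast]
    exact pow_le_pow_of_le_one hq0.le hq1.le (Nat.le_self_pow two_ne_zero n)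
  exact Summable.of_nat_of_neg h (by simpa using h)

lemma summable_zpow_sq_mul_cos (hq0 : 0 < q) (hq1 : q < 1) (φ : ℝ) :
    Summable fun i : ℤ => q ^ (i ^ 2) * cos (i * φ) :=
  (summable_zpow_sq hq0 hq1).of_norm_bounded fun i => by
    rw [norm_mul, Real.norm_of_nonneg (by positivity)]
    exact mul_le_of_le_one_right (by positivity) (abs_cos_le_one _)

/-- Jacobi's `ϑ₄(θ / 2, q)`. -/
noncomputable def thetaFour (q θ : ℝ) : ℝ :=
  1 + 2 * ∑' n : ℕ, (-1) ^ (n + 1) * q ^ ((n + 1) ^ 2) * cos ((n + 1) * θ)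

lemma tsum_zpow_sq_mul_cos (hq0 : 0 < q) (hq1 : q < 1) (θ : ℝ) :
    ∑' i : ℤ, q ^ (i ^ 2) * cos (i * (θ + π)) = thetaFour q θ := by
  have heven : Function.Even fun i : ℤ => q ^ (i ^ 2) * cos (i * (θ + π)) := fun i => by simp
  rw [tsum_int_eq_zero_add_two_mul_tsum_pnat heven (summable_zpow_sq_mul_cos hq0 hq1 (θ + π)),
    tsum_pnat_eq_tsum_succ (f := fun n : ℕ => q ^ ((n : ℤ) ^ 2) * cos ((n : ℤ) * (θ + π))),
    thetaFour, nsmul_eq_mul]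
  congr 1
  · simp
  refine congrArg _ (tsum_congr fun n => ?_)
  rw [Int.cast_natCast, mul_add, cos_add_nat_mul_pi, ← Nat.cast_pow, zpow_natCast]
  push_cast
  ring

theorem tendsto_prod_thetaFactor (hq0 : 0 < q) (hq1 : q < 1) (θ : ℝ) :
    Tendsto (fun m => ∏ n ∈ range m, thetaFactor (cos θ) (q ^ (2 * n + 1)))
      atTop (𝓝 ((qPochhammerInf (q ^ 2))⁻¹ * thetaFour q θ)) := by
  have hQ0 : 0 ≤ q ^ 2 := by positivity
  have hQ1 : q ^ 2 < 1 := pow_lt_one₀ hq0.le hq1 two_ne_zero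
  simp_rw [prod_thetaFactor_eq_sum hq0.ne', mul_assoc, ← tsum_zpow_sq_mul_cos hq0 hq1 θ]
  refine tendsto_sum_Icc_mul (A := (qPochhammerInf (q ^ 2))⁻¹)
    (summable_zpow_sq_mul_cos hq0 hq1 _) (fun i => ?_) (fun m i => ?_)
  · have hto : ∀ c : ℤ, Tendsto (fun m : ℕ => (c + m).toNat) atTop atTop := fun c =>
      tendsto_atTop_atTop.2 fun b => ⟨b + c.natAbs, fun m hm => by omega⟩
    refine (tendsto_gaussBinom_add hQ0 hQ1 (hto i) (hto (-i))).congr' ?_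
    filter_upwards [eventually_ge_atTop i.natAbs] with m hm
    congr 1; omega
  · rw [abs_of_nonneg (gaussBinom_nonneg hQ0 _ _)]
    exact gaussBinom_le_inv_qPochhammerInf hQ0 hQ1 _ _

end TripleProduct

section Monotonicity

variable {c c₁ c₂ r r' q q' : ℝ}

lemma sq_one_sub_le_thetaFactor (hc : c ≤ 1) (hr : 0 ≤ r) : (1 - r) ^ 2 ≤ thetaFactor c r := by
  rw [thetaFactor]; nlinarith

lemma thetaFactor_pos (hc : c ≤ 1) (hr0 : 0 ≤ r) (hr1 : r < 1) : 0 < thetaFactor c r :=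
  (pow_pos (sub_pos.2 hr1) 2).trans_le (sq_one_sub_le_thetaFactor hc hr0)

lemma thetaFactor_div_lt (hc : c₂ < c₁) (hc₁ : c₁ ≤ 1) (hr : 0 ≤ r) (hrr' : r < r')
    (hr' : r' < 1) :
    thetaFactor c₁ r' / thetaFactor c₂ r' < thetaFactor c₁ r / thetaFactor c₂ r := by
  have hc₂ : c₂ ≤ 1 := hc.le.trans hc₁
  rw [div_lt_div_iff₀ (thetaFactor_pos hc₂ (hr.trans hrr'.le) hr')
    (thetaFactor_pos hc₂ hr (hrr'.trans hr'))]
  have key : thetaFactor c₁ r * thetaFactor c₂ r' - thetaFactor c₁ r' * thetaFactor c₂ r =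
      2 * (c₁ - c₂) * (r' - r) * (1 - r * r') := by
    simp only [thetaFactor]; ring
  have : 0 < 2 * (c₁ - c₂) * (r' - r) * (1 - r * r') := by
    have : r * r' < 1 := by nlinarith
    have := sub_pos.2 hc
    have := sub_pos.2 hrr'
    positivity
  linarith

lemma sq_qPochhammer_le_prod_thetaFactor (hq0 : 0 ≤ q) (hq1 : q < 1) (θ : ℝ) (m : ℕ) :
    qPochhammer q m ^ 2 ≤ ∏ n ∈ range m, thetaFactor (cos θ) (q ^ (2 * n + 1)) := by
  rw [qPochhammer, ← prod_pow]
  refine prod_le_prod (fun n _ => sq_nonneg _) fun n _ => ?_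
  refine le_trans ?_ (sq_one_sub_le_thetaFactor (cos_le_one θ) (pow_nonneg hq0 _))
  refine pow_le_pow_left₀ (one_sub_pow_succ_pos hq0 hq1 n).le ?_ 2
  exact sub_le_sub_left (pow_le_pow_of_le_one hq0 hq1.le (by omega)) 1

theorem thetaFour_pos (hq0 : 0 < q) (hq1 : q < 1) (θ : ℝ) : 0 < thetaFour q θ := by
  have hC : 0 < (qPochhammerInf (q ^ 2))⁻¹ :=
    inv_pos.2 (qPochhammerInf_pos (by positivity) (pow_lt_one₀ hq0.le hq1 two_ne_zero))
  have hlow : qPochhammerInf q ^ 2 ≤ (qPochhammerInf (q ^ 2))⁻¹ * thetaFour q θ :=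
    ge_of_tendsto (tendsto_prod_thetaFactor hq0 hq1 θ) (Eventually.of_forall fun m =>
      (pow_le_pow_left₀ (qPochhammerInf_pos hq0.le hq1).le (qPochhammerInf_le hq0.le hq1 m) 2).trans
        (sq_qPochhammer_le_prod_thetaFactor hq0.le hq1 θ m))
  exact (mul_pos_iff_of_pos_left hC).1 ((pow_pos (qPochhammerInf_pos hq0.le hq1) 2).trans_le hlow)

lemma tendsto_prod_thetaFactor_div (hq0 : 0 < q) (hq1 : q < 1) (θ₁ θ₂ : ℝ) :
    Tendsto (fun m => ∏ n ∈ range m,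
        thetaFactor (cos θ₁) (q ^ (2 * n + 1)) / thetaFactor (cos θ₂) (q ^ (2 * n + 1)))
      atTop (𝓝 (thetaFour q θ₁ / thetaFour q θ₂)) := by
  have hC := inv_pos.2 (qPochhammerInf_pos (by positivity) (pow_lt_one₀ hq0.le hq1 two_ne_zero))
  have := (tendsto_prod_thetaFactor hq0 hq1 θ₁).div (tendsto_prod_thetaFactor hq0 hq1 θ₂)
    (mul_pos hC (thetaFour_pos hq0 hq1 θ₂)).ne'
  rw [mul_div_mul_left _ _ hC.ne'] at this
  simp only [prod_div_distrib]
  exact this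

lemma prod_range_succ_le_div_mul_prod {f g : ℕ → ℝ} (hg : 0 < g 0) (hf : ∀ n, 0 ≤ f n)
    (hfg : ∀ n, f n ≤ g n) (m : ℕ) :
    ∏ n ∈ range (m + 1), f n ≤ f 0 / g 0 * ∏ n ∈ range (m + 1), g n := by
  rw [prod_range_succ', prod_range_succ', mul_comm (∏ n ∈ range m, g (n + 1)), ← mul_assoc,
    div_mul_cancel₀ _ hg.ne', mul_comm]
  exact mul_le_mul_of_nonneg_left (prod_le_prod (fun n _ => hf _) fun n _ => hfg _) (hf 0)

theorem thetaFour_div_lt {θ₁ θ₂ : ℝ} (hθ : cos θ₂ < cos θ₁) (hq : 0 < q) (hqq' : q < q')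
    (hq' : q' < 1) : thetaFour q' θ₁ / thetaFour q' θ₂ < thetaFour q θ₁ / thetaFour q θ₂ := by
  have hq'0 : 0 < q' := hq.trans hqq'
  have hq1 : q < 1 := hqq'.trans hq'
  set f := fun r => thetaFactor (cos θ₁) r / thetaFactor (cos θ₂) r
  have hf_pos : ∀ r, 0 ≤ r → r < 1 → 0 < f r := fun r hr0 hr1 =>
    div_pos (thetaFactor_pos (cos_le_one _) hr0 hr1) (thetaFactor_pos (cos_le_one _) hr0 hr1)
  have hf_lt : ∀ n : ℕ, f (q' ^ (2 * n + 1)) < f (q ^ (2 * n + 1)) := fun n =>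
    thetaFactor_div_lt hθ (cos_le_one _) (pow_nonneg hq.le _)
      (pow_lt_pow_left₀ hqq' hq.le (by omega)) (pow_lt_one₀ hq'0.le hq' (by omega))
  have hκ : f (q' ^ (2 * 0 + 1)) / f (q ^ (2 * 0 + 1)) < 1 :=
    (div_lt_one (hf_pos _ (pow_nonneg hq.le _) (pow_lt_one₀ hq.le hq1 (by omega)))).2 (hf_lt 0)
  have hle : thetaFour q' θ₁ / thetaFour q' θ₂ ≤
      f (q' ^ (2 * 0 + 1)) / f (q ^ (2 * 0 + 1)) * (thetaFour q θ₁ / thetaFour q θ₂) :=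
    le_of_tendsto_of_tendsto'
      ((tendsto_prod_thetaFactor_div hq'0 hq' θ₁ θ₂).comp (tendsto_add_atTop_nat 1))
      (((tendsto_prod_thetaFactor_div hq hq1 θ₁ θ₂).comp (tendsto_add_atTop_nat 1)).const_mul _)
      fun m => prod_range_succ_le_div_mul_prod
        (hf_pos _ (pow_nonneg hq.le _) (pow_lt_one₀ hq.le hq1 (by omega)))
        (fun n => (hf_pos _ (pow_nonneg hq'0.le _) (pow_lt_one₀ hq'0.le hq' (by omega))).le)
        (fun n => (hf_lt n).le) m
  exact hle.trans_lt (mul_lt_of_lt_one_left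
    (div_pos (thetaFour_pos hq hq1 θ₁) (thetaFour_pos hq hq1 θ₂)) hκ)

end Monotonicity

section Elliptic

variable {k : ℝ}

lemma one_sub_sq_mul_sin_sq_pos (hk : k ^ 2 < 1) (θ : ℝ) : 0 < 1 - k ^ 2 * sin θ ^ 2 := by
  nlinarith [sin_sq_le_one θ, sq_nonneg k]

lemma continuous_EllK_integrand (hk : k ^ 2 < 1) :
    Continuous fun θ => 1 / √(1 - k ^ 2 * sin θ ^ 2) :=
  continuous_const.div (by fun_prop) fun θ => (sqrt_pos.2 (one_sub_sq_mul_sin_sq_pos hk θ)).ne'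

lemma EllK_pos (hk : k ^ 2 < 1) : 0 < EllK k :=
  intervalIntegral.intervalIntegral_pos_of_pos_on
    ((continuous_EllK_integrand hk).intervalIntegrable _ _)
    (fun θ _ => one_div_pos.2 (sqrt_pos.2 (one_sub_sq_mul_sin_sq_pos hk θ))) (by positivity)

lemma EllK_strictMonoOn : StrictMonoOn EllK (Set.Ico 0 1) := by
  intro k₁ hk₁ k₂ hk₂ hk
  have hsq : k₁ ^ 2 < k₂ ^ 2 := pow_lt_pow_left₀ hk hk₁.1 two_ne_zero
  have hk₂' : k₂ ^ 2 < 1 := pow_lt_one₀ (hk₁.1.trans hk.le) hk₂.2 two_ne_zero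
  have hk₁' : k₁ ^ 2 < 1 := hsq.trans hk₂'
  refine intervalIntegral.integral_lt_integral_of_continuousOn_of_le_of_exists_lt
    (by positivity) (continuous_EllK_integrand hk₁').continuousOn
    (continuous_EllK_integrand hk₂').continuousOn (fun θ _ => ?_) ⟨π / 2, ?_, ?_⟩
  · refine one_div_le_one_div_of_le (sqrt_pos.2 (one_sub_sq_mul_sin_sq_pos hk₂' θ)) ?_
    exact sqrt_le_sqrt (by nlinarith [sq_nonneg (sin θ)])
  · exact ⟨by positivity, le_rfl⟩
  · simp only [sin_pi_div_two, one_pow, mul_one]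
    exact one_div_lt_one_div_of_lt (sqrt_pos.2 (by linarith))
      (sqrt_lt_sqrt (by linarith) (by linarith))

lemma sq_sqrt_one_sub_sq_lt_one (hk : k ∈ Set.Ioo 0 1) : √(1 - k ^ 2) ^ 2 < 1 := by
  rw [sq_sqrt (by nlinarith [hk.1, hk.2])]
  nlinarith [hk.1]

lemma nome_mem_Ioo (hk : k ∈ Set.Ioo 0 1) : nome k ∈ Set.Ioo 0 1 := by
  have hK := EllK_pos (pow_lt_one₀ hk.1.le hk.2 two_ne_zero)
  have hK' : 0 < EllK' k := EllK_pos (sq_sqrt_one_sub_sq_lt_one hk)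
  refine ⟨exp_pos _, exp_lt_one_iff.2 (div_neg_of_neg_of_pos ?_ hK)⟩
  nlinarith [pi_pos]

lemma nome_strictMonoOn : StrictMonoOn nome (Set.Ioo 0 1) := by
  intro k₁ hk₁ k₂ hk₂ hk
  have hK₁ := EllK_pos (pow_lt_one₀ hk₁.1.le hk₁.2 two_ne_zero)
  have hK : EllK k₁ < EllK k₂ := EllK_strictMonoOn ⟨hk₁.1.le, hk₁.2⟩ ⟨hk₂.1.le, hk₂.2⟩ hk
  have hK' : EllK' k₂ < EllK' k₁ := by
    have hmem : ∀ k ∈ Set.Ioo (0 : ℝ) 1, √(1 - k ^ 2) ∈ Set.Ico (0 : ℝ) 1 := fun k hk =>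
      ⟨sqrt_nonneg _, (sq_lt_one_iff₀ (sqrt_nonneg _)).1 (sq_sqrt_one_sub_sq_lt_one hk)⟩
    refine EllK_strictMonoOn (hmem k₂ hk₂) (hmem k₁ hk₁) (sqrt_lt_sqrt ?_ ?_)
    · nlinarith [hk₂.1, hk₂.2]
    · nlinarith [hk₁.1]
  have hK'₂ : 0 < EllK' k₂ := EllK_pos (sq_sqrt_one_sub_sq_lt_one hk₂)
  refine exp_lt_exp.2 ?_
  simp only [neg_mul, neg_div, neg_lt_neg_iff, mul_div_assoc]
  exact mul_lt_mul_of_pos_left (div_lt_div₀ hK' hK.le (hK'₂.trans hK').le hK₁) pi_pos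

lemma JTheta_mul_EllK (hk : EllK k ≠ 0) (l : ℝ) :
    JTheta (l * EllK k) k = thetaFour (nome k) (l * π) := by
  rw [JTheta, thetaFour]
  congr 3 with n
  congr 2
  field_simp

end Elliptic

theorem stmt_0 (lam mu : ℝ) (h : Real.cos (lam * π) > Real.cos (mu * π)) :
    (∀ k ∈ Set.Ioo (0:ℝ) 1,
      0 < JTheta (lam * EllK k) k / JTheta (mu * EllK k) k) ∧
    StrictAntiOn (fun k => JTheta (lam * EllK k) k / JTheta (mu * EllK k) k)
      (Set.Ioo (0:ℝ) 1) := by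
  have hJ : ∀ l, ∀ k ∈ Set.Ioo (0 : ℝ) 1, JTheta (l * EllK k) k = thetaFour (nome k) (l * π) :=
    fun l k hk => JTheta_mul_EllK (EllK_pos (pow_lt_one₀ hk.1.le hk.2 two_ne_zero)).ne' l
  refine ⟨fun k hk => ?_, fun k₁ hk₁ k₂ hk₂ hk => ?_⟩
  · obtain ⟨hq0, hq1⟩ := nome_mem_Ioo hk
    rw [hJ lam k hk, hJ mu k hk]
    exact div_pos (thetaFour_pos hq0 hq1 _) (thetaFour_pos hq0 hq1 _)
  · simp only [hJ lam _ hk₁, hJ mu _ hk₁, hJ lam _ hk₂, hJ mu _ hk₂]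
    exact thetaFour_div_lt h (nome_mem_Ioo hk₁).1 (nome_strictMonoOn hk₁ hk₂ hk)
      (nome_mem_Ioo hk₂).2
end

section
/- For each k ∈ (0,1), the function K'(k) := K(√(1−k²)) is differentiable at k with derivative dK'/dk = (k²K'(k) − E'(k))/(k k'²), where k' = √(1−k²) and E'(k) := E(k'). -/
open Real

/-!
Work with the parameter `m = k'²` and `Δ(θ) = √(1 - m sin²θ)`. Differentiating under the integral
sign gives `dK/dm = ∫ sin²θ / (2Δ³)`, and since `m sin²θ = 1 - Δ²` this is `(J - K) / (2m)` with
`J = ∫ Δ⁻³`. The identity `(1 - m) J = E` comes from the exact derivative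
`d/dθ (m sin θ cos θ / Δ) = Δ - (1 - m) / Δ³`, whose integral over `[0, π/2]` vanishes. The chain
rule through `m = 1 - k²` then gives the formula for `K'`.
-/

open Set MeasureTheory intervalIntegral

/-- The complete elliptic integrals in terms of the parameter `m = k²`, so that
`EllK k = completeEllipticK (k ^ 2)` definitionally. -/
noncomputable def completeEllipticK (m : ℝ) : ℝ :=
  ∫ θ in (0:ℝ)..(π/2), 1 / √(1 - m * sin θ ^ 2)

noncomputable def completeEllipticE (m : ℝ) : ℝ :=
  ∫ θ in (0:ℝ)..(π/2), √(1 - m * sin θ ^ 2)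

lemma ellK'_eq_completeEllipticK {k : ℝ} (hk : k ^ 2 ≤ 1) :
    EllK' k = completeEllipticK (1 - k ^ 2) := by
  rw [EllK', EllK, sq_sqrt (sub_nonneg.2 hk), completeEllipticK]

lemma ellE'_eq_completeEllipticE {k : ℝ} (hk : k ^ 2 ≤ 1) :
    EllE' k = completeEllipticE (1 - k ^ 2) := by
  rw [EllE', EllE, sq_sqrt (sub_nonneg.2 hk), completeEllipticE]

-- `1 - m sin²θ` is a convex combination of `1` and `1 - m`.
lemma min_one_one_sub_le_one_sub_mul_sin_sq (m θ : ℝ) :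
    min 1 (1 - m) ≤ 1 - m * sin θ ^ 2 := by
  have hs := sin_sq_le_one θ
  nlinarith [mul_le_mul_of_nonneg_left (min_le_left 1 (1 - m)) (sub_nonneg.2 hs),
    mul_le_mul_of_nonneg_left (min_le_right 1 (1 - m)) (sq_nonneg (sin θ))]

lemma one_sub_mul_sin_sq_pos {m : ℝ} (hm : m < 1) (θ : ℝ) : 0 < 1 - m * sin θ ^ 2 :=
  (lt_min one_pos (sub_pos.2 hm)).trans_le (min_one_one_sub_le_one_sub_mul_sin_sq m θ)

lemma continuous_sqrt_one_sub_mul_sin_sq (m : ℝ) :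
    Continuous fun θ => √(1 - m * sin θ ^ 2) := by
  fun_prop

lemma hasDerivAt_mul_sin_mul_cos_div_sqrt {m : ℝ} (hm : m < 1) (θ : ℝ) :
    HasDerivAt (fun t => m * sin t * cos t / √(1 - m * sin t ^ 2))
      (√(1 - m * sin θ ^ 2) - (1 - m) / √(1 - m * sin θ ^ 2) ^ 3) θ := by
  have hpos := one_sub_mul_sin_sq_pos hm θ
  have hΔ : HasDerivAt (fun t => √(1 - m * sin t ^ 2))
      (-(m * (2 * sin θ ^ 1 * cos θ)) / (2 * √(1 - m * sin θ ^ 2))) θ :=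
    ((((hasDerivAt_sin θ).pow 2).const_mul m).const_sub 1).sqrt hpos.ne'
  have h := (((hasDerivAt_sin θ).const_mul m).mul (hasDerivAt_cos θ)).div hΔ
    (sqrt_pos.2 hpos).ne'
  refine h.congr_deriv ?_
  have hsq := sq_sqrt hpos.le
  have hcos := cos_sq' θ
  set r := √(1 - m * sin θ ^ 2)
  have hr := sqrt_pos.2 hpos
  simp only [Pi.mul_apply]
  field_simp
  congr 1
  linear_combination
    (m * (cos θ ^ 2 - sin θ ^ 2) - r ^ 2 - (1 - m * sin θ ^ 2)) * hsq + m * hcos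

lemma one_sub_mul_integral_one_div_sqrt_pow_three {m : ℝ} (hm : m < 1) :
    (1 - m) * ∫ θ in (0:ℝ)..(π/2), 1 / √(1 - m * sin θ ^ 2) ^ 3 = completeEllipticE m := by
  have hΔ := continuous_sqrt_one_sub_mul_sin_sq m
  have hΔ3 : Continuous fun θ => (1 - m) / √(1 - m * sin θ ^ 2) ^ 3 :=
    continuous_const.div (hΔ.pow 3) fun θ =>
      pow_ne_zero 3 (sqrt_pos.2 (one_sub_mul_sin_sq_pos hm θ)).ne'
  have hFTC := integral_eq_sub_of_hasDerivAt
    (fun θ _ => hasDerivAt_mul_sin_mul_cos_div_sqrt hm θ)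
    ((hΔ.sub hΔ3).intervalIntegrable 0 (π/2))
  rw [integral_sub (hΔ.intervalIntegrable _ _) (hΔ3.intervalIntegrable _ _)] at hFTC
  simp only [sin_zero, cos_pi_div_two, mul_zero, zero_mul, zero_div, sub_zero] at hFTC
  rw [← intervalIntegral.integral_const_mul]
  simp_rw [mul_one_div]
  rw [completeEllipticE]
  linarith

lemma hasDerivAt_one_div_sqrt_one_sub_mul {m : ℝ} (s : ℝ) (h : 0 < 1 - m * s) :
    HasDerivAt (fun x => 1 / √(1 - x * s)) (s / (2 * √(1 - m * s) ^ 3)) m := by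
  have hr := sqrt_pos.2 h
  simp only [one_div]
  refine (((((hasDerivAt_id' m).mul_const s).const_sub 1).sqrt h.ne').inv hr.ne').congr_deriv ?_
  field_simp

lemma norm_sin_sq_div_two_mul_sqrt_pow_three_le {x μ : ℝ} (θ : ℝ) (hμ : 0 < μ)
    (h : μ ≤ 1 - x * sin θ ^ 2) :
    ‖sin θ ^ 2 / (2 * √(1 - x * sin θ ^ 2) ^ 3)‖ ≤ 1 / (2 * √μ ^ 3) := by
  have hμr := sqrt_pos.2 hμ
  rw [norm_of_nonneg (by positivity)]
  calc sin θ ^ 2 / (2 * √(1 - x * sin θ ^ 2) ^ 3)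
      ≤ 1 / (2 * √(1 - x * sin θ ^ 2) ^ 3) := by gcongr; exact sin_sq_le_one θ
    _ ≤ 1 / (2 * √μ ^ 3) := by gcongr

lemma hasDerivAt_completeEllipticK_eq_integral {m : ℝ} (hm : m < 1) :
    HasDerivAt completeEllipticK
      (∫ θ in (0:ℝ)..(π/2), sin θ ^ 2 / (2 * √(1 - m * sin θ ^ 2) ^ 3)) m := by
  set δ := (1 - m) / 2
  have hδ : 0 < δ := by simp only [δ]; linarith
  have hball : ∀ x ∈ Metric.ball m δ, ∀ θ, min 1 δ ≤ 1 - x * sin θ ^ 2 := by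
    intro x hx θ
    rw [Metric.mem_ball, Real.dist_eq, abs_lt] at hx
    exact (min_le_min_left 1 (by simp only [δ] at hx ⊢; linarith)).trans
      (min_one_one_sub_le_one_sub_mul_sin_sq x θ)
  have hμ : 0 < min 1 δ := lt_min one_pos hδ
  have hpos : ∀ x ∈ Metric.ball m δ, ∀ θ, 0 < 1 - x * sin θ ^ 2 :=
    fun x hx θ => hμ.trans_le (hball x hx θ)
  have hcont : ∀ x ∈ Metric.ball m δ, Continuous fun θ => 1 / √(1 - x * sin θ ^ 2) :=
    fun x hx => continuous_const.div (continuous_sqrt_one_sub_mul_sin_sq x) fun θ =>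
      (sqrt_pos.2 (hpos x hx θ)).ne'
  have hm_mem : m ∈ Metric.ball m δ := Metric.mem_ball_self hδ
  have hcont' : Continuous fun θ => sin θ ^ 2 / (2 * √(1 - m * sin θ ^ 2) ^ 3) :=
    (continuous_sin.pow 2).div
      (continuous_const.mul ((continuous_sqrt_one_sub_mul_sin_sq m).pow 3)) fun θ =>
        mul_ne_zero two_ne_zero (pow_ne_zero 3 (sqrt_pos.2 (hpos m hm_mem θ)).ne')
  exact (hasDerivAt_integral_of_dominated_loc_of_deriv_le (Metric.ball_mem_nhds m hδ)
    (Filter.eventually_of_mem (Metric.ball_mem_nhds m hδ) fun x hx =>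
      (hcont x hx).aestronglyMeasurable)
    ((hcont m hm_mem).intervalIntegrable _ _) hcont'.aestronglyMeasurable
    (Filter.Eventually.of_forall fun θ _ x hx =>
      norm_sin_sq_div_two_mul_sqrt_pow_three_le θ hμ (hball x hx θ))
    intervalIntegrable_const
    (Filter.Eventually.of_forall fun θ _ x hx =>
      hasDerivAt_one_div_sqrt_one_sub_mul _ (hpos x hx θ))).2

lemma hasDerivAt_completeEllipticK {m : ℝ} (hm0 : m ≠ 0) (hm : m < 1) :
    HasDerivAt completeEllipticK
      ((completeEllipticE m / (1 - m) - completeEllipticK m) / (2 * m)) m := by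
  have hpos := one_sub_mul_sin_sq_pos hm
  have hΔ := continuous_sqrt_one_sub_mul_sin_sq m
  have hΔ0 : ∀ θ, √(1 - m * sin θ ^ 2) ≠ 0 := fun θ => (sqrt_pos.2 (hpos θ)).ne'
  have hsplit : ∀ θ, sin θ ^ 2 / (2 * √(1 - m * sin θ ^ 2) ^ 3)
      = (1 / √(1 - m * sin θ ^ 2) ^ 3 - 1 / √(1 - m * sin θ ^ 2)) / (2 * m) := by
    intro θ
    have hsq := sq_sqrt (hpos θ).le
    have hr := hΔ0 θ
    set r := √(1 - m * sin θ ^ 2)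
    field_simp
    linear_combination hsq
  have hint3 : IntervalIntegrable (fun θ => 1 / √(1 - m * sin θ ^ 2) ^ 3) volume 0 (π/2) :=
    (continuous_const.div (hΔ.pow 3) fun θ => pow_ne_zero 3 (hΔ0 θ)).intervalIntegrable _ _
  have hint1 : IntervalIntegrable (fun θ => 1 / √(1 - m * sin θ ^ 2)) volume 0 (π/2) :=
    (continuous_const.div hΔ hΔ0).intervalIntegrable _ _
  convert hasDerivAt_completeEllipticK_eq_integral hm using 1
  simp_rw [hsplit]
  rw [intervalIntegral.integral_div, integral_sub hint3 hint1, ← completeEllipticK,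
    ← one_sub_mul_integral_one_div_sqrt_pow_three hm]
  field_simp [(sub_pos.2 hm).ne']

theorem stmt_7 (k : ℝ) (hk : k ∈ Set.Ioo (0:ℝ) 1) :
    HasDerivAt EllK'
      ((k^2 * EllK' k - EllE' k) / (k * Real.sqrt (1 - k^2) ^ 2)) k := by
  obtain ⟨hk0, hk1⟩ := hk
  have hk2 : k ^ 2 < 1 := by nlinarith
  have hlocal : (fun x => completeEllipticK (1 - x ^ 2)) =ᶠ[nhds k] EllK' := by
    filter_upwards [Ioo_mem_nhds (by linarith : -1 < k) hk1] with x hx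
    exact (ellK'_eq_completeEllipticK (by nlinarith [hx.1, hx.2])).symm
  have h := (hasDerivAt_completeEllipticK (by linarith : 1 - k ^ 2 ≠ 0)
    (by nlinarith : 1 - k ^ 2 < 1)).comp k ((hasDerivAt_pow 2 k).const_sub 1)
  refine (h.congr_of_eventuallyEq hlocal.symm).congr_deriv ?_
  rw [sq_sqrt (sub_nonneg.2 hk2.le), ellK'_eq_completeEllipticK hk2.le,
    ellE'_eq_completeEllipticE hk2.le]
  field_simp
  ring
end
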